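/- arXiv:2311.16643 — 2 statements merged into one kernel-verified Lean document; each statement's English description precedes it below -/
import Mathlib

section
/- Let L be a finite lattice, let T be a trinket-removal set of L, and let R be the induced lattice on L \ T. Then R is a rack: for every decoration site (a,b) of R, either a has exactly two upper covers in R or there is no doubly irreducible element of R strictly between a and b, i.e., min(d, k−2) = 0 for every decoration site of R. -/
/-! Every element `t` of a trinket-removal set `T` is doubly irreducible, with `a ⋖ t ⋖ b` for a
site `(a, b)`, and every site keeps at least two upper covers of `a` outside `T`; so removing `T`
does not change the covering relation among the remaining elements. A doubly irreducible element
`x` of `R = L \ T` is therefore not a corner of a site of `L`, hence is doubly irreducible in `L`,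
and a site `(a, b)` of `R` with `a < x < b` is a site of `L`. Since `x` survived, `T` removed
`k - 2` (rather than all `d` trinkets) of the `k` upper covers of `a`, leaving exactly two in `R`. -/

/-- An element of a finite lattice is *doubly irreducible* if it has exactly one
upper cover and exactly one lower cover. -/
def DoublyIrreducible {α : Type*} [Lattice α] (x : α) : Prop :=
  (∃! u, x ⋖ u) ∧ (∃! l, l ⋖ x)

/-- A *decoration site* of a lattice is a pair `(a, b)` such that the set of upper
covers of `a` equals the set of lower covers of `b`, and `a` has at least two
upper covers. -/
def DecorationSite {α : Type*} [Lattice α] (a b : α) : Prop :=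
  {x | a ⋖ x} = {x | x ⋖ b} ∧ 2 ≤ {x | a ⋖ x}.ncard

/-- The doubly irreducible elements strictly between `a` and `b`. -/
def siteTrinkets {α : Type*} [Lattice α] (a b : α) : Set α :=
  {x | DoublyIrreducible x ∧ a < x ∧ x < b}

/-- A *trinket-removal set* of a lattice: for every decoration site `(a, b)` it
contains exactly `min d (k - 2)` doubly irreducible elements strictly between
`a` and `b` (where `d` is the number of doubly irreducible elements strictly
between `a` and `b`, and `k` is the number of upper covers of `a`), and it
contains no other elements. -/
def TrinketRemovalSet {α : Type*} [Lattice α] (T : Set α) : Prop :=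
  (∀ a b : α, DecorationSite a b →
      (T ∩ siteTrinkets a b).ncard =
        min (siteTrinkets a b).ncard ({x | a ⋖ x}.ncard - 2)) ∧
  ∀ t ∈ T, ∃ a b : α, DecorationSite a b ∧ t ∈ siteTrinkets a b

/-- A finite lattice is a *rack* if `min d (k - 2) = 0` for every decoration site. -/
def IsRack (α : Type*) [Lattice α] : Prop :=
  ∀ a b : α, DecorationSite a b →
    min (siteTrinkets a b).ncard ({x | a ⋖ x}.ncard - 2) = 0

/-- A *knot* of a finite lattice is an element distinct from top and bottom that
is comparable with every element. -/
def IsKnot {α : Type*} [Lattice α] (x : α) : Prop :=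
  (∃ y, x < y) ∧ (∃ y, y < x) ∧ ∀ y, x ≤ y ∨ y ≤ x

/-- Birkhoff's semimodularity condition: whenever distinct `x` and `y` both
cover a common element `a`, the join `x ⊔ y` covers both `x` and `y`. -/
def Semimodular (α : Type*) [Lattice α] : Prop :=
  ∀ a x y : α, x ≠ y → a ⋖ x → a ⋖ y → x ⋖ x ⊔ y ∧ y ⋖ x ⊔ y

/-- The modular law: for all `x ≤ z`, `x ⊔ (y ⊓ z) = (x ⊔ y) ⊓ z`. -/
def ModularLaw (α : Type*) [Lattice α] : Prop :=
  ∀ x y z : α, x ≤ z → x ⊔ (y ⊓ z) = (x ⊔ y) ⊓ z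

section Lattice

variable {α : Type*} [Lattice α] {a b x u v : α}

theorem DoublyIrreducible.eq_of_covBy (hx : DoublyIrreducible x) (hu : x ⋖ u) (hv : x ⋖ v) :
    u = v :=
  hx.1.unique hu hv

theorem DoublyIrreducible.eq_of_covBy' (hx : DoublyIrreducible x) (hu : u ⋖ x) (hv : v ⋖ x) :
    u = v :=
  hx.2.unique hu hv

theorem DecorationSite.covBy_iff (h : DecorationSite a b) : a ⋖ x ↔ x ⋖ b :=
  Set.ext_iff.mp h.1 x

theorem DecorationSite.covBy_of_lt_of_lt [Finite α] (h : DecorationSite a b) (hax : a < x)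
    (hxb : x < b) : a ⋖ x ∧ x ⋖ b := by
  obtain ⟨c, hac, hcx⟩ := exists_covBy_le_of_lt hax
  obtain rfl : c = x := hcx.eq_of_not_lt fun hcx' => (h.covBy_iff.mp hac).2 hcx' hxb
  exact ⟨hac, h.covBy_iff.mp hac⟩

end Lattice

namespace TrinketRemovalSet

variable {α : Type*} [Lattice α] [Finite α] {T : Set α} {a b t x y : α}

theorem exists_site_of_mem (hT : TrinketRemovalSet T) (ht : t ∈ T) :
    ∃ a b, DecorationSite a b ∧ DoublyIrreducible t ∧ a ⋖ t ∧ t ⋖ b := by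
  obtain ⟨a, b, hab, hdi, hat, htb⟩ := hT.2 t ht
  exact ⟨a, b, hab, hdi, hab.covBy_of_lt_of_lt hat htb⟩

theorem doublyIrreducible_of_mem (hT : TrinketRemovalSet T) (ht : t ∈ T) :
    DoublyIrreducible t :=
  (hT.exists_site_of_mem ht).choose_spec.choose_spec.2.1

theorem exists_site_of_covBy_mem (hT : TrinketRemovalSet T) (ht : t ∈ T) (hyt : y ⋖ t) :
    ∃ b, DecorationSite y b ∧ t ⋖ b := by
  obtain ⟨a, b, hab, hdi, hat, htb⟩ := hT.exists_site_of_mem ht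
  obtain rfl := hdi.eq_of_covBy' hat hyt
  exact ⟨b, hab, htb⟩

theorem exists_site_of_mem_covBy (hT : TrinketRemovalSet T) (ht : t ∈ T) (hty : t ⋖ y) :
    ∃ a, DecorationSite a y ∧ a ⋖ t := by
  obtain ⟨a, b, hab, hdi, hat, htb⟩ := hT.exists_site_of_mem ht
  obtain rfl := hdi.eq_of_covBy htb hty
  exact ⟨a, hab, hat⟩

theorem inter_upperCovers_eq (hT : TrinketRemovalSet T) (hab : DecorationSite a b) :
    T ∩ {x | a ⋖ x} = T ∩ siteTrinkets a b := by
  ext u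
  constructor
  · rintro ⟨huT, hau⟩
    exact ⟨huT, hT.doublyIrreducible_of_mem huT, hau.lt, (hab.covBy_iff.mp hau).lt⟩
  · rintro ⟨huT, -, hau, hub⟩
    exact ⟨huT, (hab.covBy_of_lt_of_lt hau hub).1⟩

theorem ncard_upperCovers_diff (hT : TrinketRemovalSet T) (hab : DecorationSite a b) :
    ({x | a ⋖ x} \ T).ncard =
      {x | a ⋖ x}.ncard - min (siteTrinkets a b).ncard ({x | a ⋖ x}.ncard - 2) := by
  rw [← Set.sdiff_inter_self_eq_sdiff, hT.inter_upperCovers_eq hab,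
    Set.ncard_sdiff ((hT.inter_upperCovers_eq hab).symm.subset.trans Set.inter_subset_right),
    hT.1 a b hab]

theorem exists_ne_covBy_notMem (hT : TrinketRemovalSet T) (hab : DecorationSite a b) :
    ∃ c₁ c₂, a ⋖ c₁ ∧ a ⋖ c₂ ∧ c₁ ∉ T ∧ c₂ ∉ T ∧ c₁ ≠ c₂ := by
  have hk := hab.2
  have hcard : 1 < ({x | a ⋖ x} \ T).ncard := by
    rw [hT.ncard_upperCovers_diff hab]
    omega
  obtain ⟨c₁, c₂, ⟨hc₁, hc₁T⟩, ⟨hc₂, hc₂T⟩, hne⟩ := (Set.one_lt_ncard_iff).mp hcard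
  exact ⟨c₁, c₂, hc₁, hc₂, hc₁T, hc₂T, hne⟩

theorem exists_notMem_of_lt_of_lt (hT : TrinketRemovalSet T) (ht : t ∈ T) (hxt : x < t)
    (hty : t < y) : ∃ c ∉ T, x < c ∧ c < y := by
  obtain ⟨a, b, hab, -, hat, htb⟩ := hT.exists_site_of_mem ht
  obtain ⟨l, hxl, hlt⟩ := exists_le_covBy_of_lt hxt
  obtain ⟨r, htr, hry⟩ := exists_covBy_le_of_lt hty
  have hdi := hT.doublyIrreducible_of_mem ht
  have hxa : x ≤ a := hdi.eq_of_covBy' hlt hat ▸ hxl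
  have hby : b ≤ y := hdi.eq_of_covBy htr htb ▸ hry
  obtain ⟨c, -, hac, -, hcT, -, -⟩ := hT.exists_ne_covBy_notMem hab
  exact ⟨c, hcT, hxa.trans_lt hac.lt, (hab.covBy_iff.mp hac).lt.trans_le hby⟩

/-- As `x` survives, `T` does not take all `d` trinkets, so it takes `k - 2` upper covers of `a`. -/
theorem ncard_upperCovers_diff_eq_two (hT : TrinketRemovalSet T) (hab : DecorationSite a b)
    (hx : x ∈ siteTrinkets a b) (hxT : x ∉ T) : ({y | a ⋖ y} \ T).ncard = 2 := by
  have hk := hab.2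
  have hlt : {y | a ⋖ y}.ncard - 2 < (siteTrinkets a b).ncard := by
    by_contra! hle
    have hcount : (siteTrinkets a b).ncard ≤ (T ∩ siteTrinkets a b).ncard := by
      rw [hT.1 a b hab, min_eq_left hle]
    exact hxT (Set.eq_of_subset_of_ncard_le Set.inter_subset_right hcount ▸ hx).1
  rw [hT.ncard_upperCovers_diff hab, min_eq_right hlt.le]
  omega

variable {S : Sublattice α}

omit [Finite α] in
theorem mem_iff_notMem (hS : (S : Set α) = Tᶜ) : x ∈ S ↔ x ∉ T := by
  rw [← SetLike.mem_coe, hS, Set.mem_compl_iff]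

theorem coe_covBy_coe (hT : TrinketRemovalSet T) (hS : (S : Set α) = Tᶜ) {p q : S} :
    (p : α) ⋖ q ↔ p ⋖ q := by
  refine ⟨fun h => CovBy.of_image (OrderEmbedding.subtype (· ∈ S)) h,
    fun h => ⟨h.lt, fun w hpw hwq => ?_⟩⟩
  by_cases hwT : w ∈ T
  · obtain ⟨c, hcT, hpc, hcq⟩ := hT.exists_notMem_of_lt_of_lt hwT hpw hwq
    exact h.2 (c := ⟨c, (mem_iff_notMem hS).mpr hcT⟩) hpc hcq
  · exact h.2 (c := ⟨w, (mem_iff_notMem hS).mpr hwT⟩) hpw hwq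

theorem image_upperCovers (hT : TrinketRemovalSet T) (hS : (S : Set α) = Tᶜ) (p : S) :
    Subtype.val '' {q : S | p ⋖ q} = {u | (p : α) ⋖ u} \ T := by
  ext u
  constructor
  · rintro ⟨q, hpq, rfl⟩
    exact ⟨(hT.coe_covBy_coe hS).mpr hpq, (mem_iff_notMem hS).mp q.2⟩
  · rintro ⟨hpu, huT⟩
    exact ⟨⟨u, (mem_iff_notMem hS).mpr huT⟩, (hT.coe_covBy_coe hS).mp hpu, rfl⟩

/-- A doubly irreducible element of `S` is not a corner of a site of `α`, since every corner keeps
two covers in `S`. -/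
theorem notMem_of_coe_covBy (hT : TrinketRemovalSet T) (hS : (S : Set α) = Tᶜ) {p : S}
    (hp : DoublyIrreducible p) (hpy : (p : α) ⋖ y) : y ∉ T := by
  intro hyT
  obtain ⟨b, hpb, -⟩ := hT.exists_site_of_covBy_mem hyT hpy
  obtain ⟨c₁, c₂, hc₁, hc₂, hc₁T, hc₂T, hne⟩ := hT.exists_ne_covBy_notMem hpb
  have hS' := fun {c} => (mem_iff_notMem (x := c) hS).mpr
  exact hne (congrArg Subtype.val (hp.eq_of_covBy (u := ⟨c₁, hS' hc₁T⟩) (v := ⟨c₂, hS' hc₂T⟩)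
    ((hT.coe_covBy_coe hS).mp hc₁) ((hT.coe_covBy_coe hS).mp hc₂)))

theorem notMem_of_covBy_coe (hT : TrinketRemovalSet T) (hS : (S : Set α) = Tᶜ) {p : S}
    (hp : DoublyIrreducible p) (hyp : y ⋖ (p : α)) : y ∉ T := by
  intro hyT
  obtain ⟨a, hap, -⟩ := hT.exists_site_of_mem_covBy hyT hyp
  obtain ⟨c₁, c₂, hc₁, hc₂, hc₁T, hc₂T, hne⟩ := hT.exists_ne_covBy_notMem hap
  have hS' := fun {c} => (mem_iff_notMem (x := c) hS).mpr
  exact hne (congrArg Subtype.val (hp.eq_of_covBy' (u := ⟨c₁, hS' hc₁T⟩) (v := ⟨c₂, hS' hc₂T⟩)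
    ((hT.coe_covBy_coe hS).mp (hap.covBy_iff.mp hc₁))
    ((hT.coe_covBy_coe hS).mp (hap.covBy_iff.mp hc₂))))

theorem doublyIrreducible_coe (hT : TrinketRemovalSet T) (hS : (S : Set α) = Tᶜ) {p : S}
    (hp : DoublyIrreducible p) : DoublyIrreducible (p : α) := by
  have ⟨⟨u, hpu, hu⟩, ⟨l, hlp, hl⟩⟩ := hp
  refine ⟨⟨u, (hT.coe_covBy_coe hS).mpr hpu, fun y hpy => ?_⟩,
    ⟨l, (hT.coe_covBy_coe hS).mpr hlp, fun y hyp => ?_⟩⟩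
  · have hyS := (mem_iff_notMem hS).mpr (hT.notMem_of_coe_covBy hS hp hpy)
    exact congrArg Subtype.val (hu ⟨y, hyS⟩ ((hT.coe_covBy_coe hS).mp hpy))
  · have hyS := (mem_iff_notMem hS).mpr (hT.notMem_of_covBy_coe hS hp hyp)
    exact congrArg Subtype.val (hl ⟨y, hyS⟩ ((hT.coe_covBy_coe hS).mp hyp))

theorem coe_mem_siteTrinkets (hT : TrinketRemovalSet T) (hS : (S : Set α) = Tᶜ) {p q r : S}
    (hq : q ∈ siteTrinkets p r) : (q : α) ∈ siteTrinkets (p : α) r :=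
  ⟨hT.doublyIrreducible_coe hS hq.1, hq.2.1, hq.2.2⟩

/-- A site of `S` carrying a trinket is a site of `α`: a cover of its lower corner lying in `T`
belongs to a site of `α` with the same lower corner, whose upper corner is then the unique upper
cover of the trinket. -/
theorem decorationSite_coe (hT : TrinketRemovalSet T) (hS : (S : Set α) = Tᶜ) {p q r : S}
    (hpr : DecorationSite p r) (hq : q ∈ siteTrinkets p r) : DecorationSite (p : α) r := by
  have hqL := hT.doublyIrreducible_coe hS hq.1
  obtain ⟨hpqL, hqrL⟩ := (hpr.covBy_of_lt_of_lt hq.2.1 hq.2.2).imp (hT.coe_covBy_coe hS).mpr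
    (hT.coe_covBy_coe hS).mpr
  have hS' := fun {c} => (mem_iff_notMem (x := c) hS).mpr
  refine ⟨Set.ext fun u => ⟨fun hpu => ?_, fun hur => ?_⟩, ?_⟩
  · by_cases huT : u ∈ T
    · obtain ⟨b, hpb, hub⟩ := hT.exists_site_of_covBy_mem huT hpu
      exact hqL.eq_of_covBy (hpb.covBy_iff.mp hpqL) hqrL ▸ hub
    · exact (hT.coe_covBy_coe hS).mpr
        (hpr.covBy_iff.mp ((hT.coe_covBy_coe hS (q := ⟨u, hS' huT⟩)).mp hpu))
  · by_cases huT : u ∈ T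
    · obtain ⟨a, har, hau⟩ := hT.exists_site_of_mem_covBy huT hur
      exact hqL.eq_of_covBy' (har.covBy_iff.mpr hqrL) hpqL ▸ hau
    · exact (hT.coe_covBy_coe hS).mpr
        (hpr.covBy_iff.mpr ((hT.coe_covBy_coe hS (p := ⟨u, hS' huT⟩)).mp hur))
  · calc 2 ≤ {u | p ⋖ u}.ncard := hpr.2
      _ = ({u | (p : α) ⋖ u} \ T).ncard := by
        rw [← hT.image_upperCovers hS, Set.ncard_image_of_injective _ Subtype.val_injective]
      _ ≤ {u | (p : α) ⋖ u}.ncard := Set.ncard_le_ncard Set.sdiff_subset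

theorem ncard_upperCovers_eq_two (hT : TrinketRemovalSet T) (hS : (S : Set α) = Tᶜ) {p q r : S}
    (hpr : DecorationSite p r) (hq : q ∈ siteTrinkets p r) : {u | p ⋖ u}.ncard = 2 := by
  rw [← Set.ncard_image_of_injective _ Subtype.val_injective, hT.image_upperCovers hS]
  exact hT.ncard_upperCovers_diff_eq_two (hT.decorationSite_coe hS hpr hq)
    (hT.coe_mem_siteTrinkets hS hq) ((mem_iff_notMem hS).mp q.2)

end TrinketRemovalSet

theorem stmt_6_general {α : Type*} [Lattice α] [Finite α] (T : Set α)
    (hT : TrinketRemovalSet T) (S : Sublattice α) (hS : (S : Set α) = Tᶜ) :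
    IsRack ↥S := by
  intro p r hpr
  rcases (siteTrinkets p r).eq_empty_or_nonempty with h | ⟨q, hq⟩
  · simp [h]
  · simp [hT.ncard_upperCovers_eq_two hS hpr hq]

/-- The lattice obtained by removing a trinket-removal set is a rack. -/
theorem stmt_6 {α : Type*} [Lattice α] [Finite α] [Nonempty α] (T : Set α)
    (hT : TrinketRemovalSet T) (S : Sublattice α) (hS : (S : Set α) = Tᶜ) :
    IsRack ↥S :=
  stmt_6_general T hT S hS
end

section
/- Let L be a finite lattice and let (a,b) be a decoration site of L whose lower corner a has at least three upper covers. If t, u, v are three distinct upper covers of a, then the pairwise joins satisfy t ⊔ u = t ⊔ v = u ⊔ v = b and the pairwise meets satisfy t ⊓ u = t ⊓ v = u ⊓ v = a (so {a, t, u, v, b} is a diamond sublattice isomorphic to M₃); consequently L is not distributive. -/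
lemma DecorationSite.covBy_of_covBy {α : Type*} [Lattice α] {a b x : α}
    (h : DecorationSite a b) (hx : a ⋖ x) : x ⋖ b :=
  h.1.subset hx

lemma DecorationSite.sup_eq {α : Type*} [Lattice α] {a b x y : α}
    (h : DecorationSite a b) (hx : a ⋖ x) (hy : a ⋖ y) (hxy : x ≠ y) : x ⊔ y = b :=
  (h.covBy_of_covBy hx).wcovBy.sup_eq (h.covBy_of_covBy hy).wcovBy hxy

lemma not_forall_inf_sup_distrib {α : Type*} [Lattice α] {t u v : α}
    (hle : t ≤ u ⊔ v) (htu : ¬ t ≤ u) (huv : t ⊓ u = t ⊓ v) :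
    ¬ ∀ x y z : α, x ⊓ (y ⊔ z) = (x ⊓ y) ⊔ (x ⊓ z) := by
  intro hdistrib
  have h := hdistrib t u v
  rw [inf_eq_left.2 hle, ← huv, sup_idem] at h
  exact htu (inf_eq_left.1 h.symm)

theorem stmt_14_general {α : Type*} [Lattice α] {a b t u v : α}
    (hab : DecorationSite a b)
    (ht : a ⋖ t) (hu : a ⋖ u) (hv : a ⋖ v)
    (htu : t ≠ u) (htv : t ≠ v) (huv : u ≠ v) :
    (t ⊔ u = b ∧ t ⊔ v = b ∧ u ⊔ v = b) ∧
    (t ⊓ u = a ∧ t ⊓ v = a ∧ u ⊓ v = a) ∧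
    ¬ (∀ x y z : α, x ⊓ (y ⊔ z) = (x ⊓ y) ⊔ (x ⊓ z)) := by
  have htu_inf : t ⊓ u = a := ht.wcovBy.inf_eq hu.wcovBy htu
  have htv_inf : t ⊓ v = a := ht.wcovBy.inf_eq hv.wcovBy htv
  have huv_sup : u ⊔ v = b := hab.sup_eq hu hv huv
  refine ⟨⟨hab.sup_eq ht hu htu, hab.sup_eq ht hv htv, huv_sup⟩,
    ⟨htu_inf, htv_inf, hu.wcovBy.inf_eq hv.wcovBy huv⟩, ?_⟩
  refine not_forall_inf_sup_distrib ?_ ?_ (htu_inf.trans htv_inf.symm)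
  · exact huv_sup ▸ (hab.covBy_of_covBy ht).le
  · exact fun hle => ht.ne (htu_inf.symm.trans (inf_eq_left.2 hle))

/-- If the lower corner of a decoration site has at least three upper covers
`t`, `u`, `v`, then `{a, t, u, v, b}` is a diamond: all pairwise joins equal `b`
and all pairwise meets equal `a`; consequently the lattice is not distributive. -/
theorem stmt_14 {α : Type*} [Lattice α] [Finite α] [Nonempty α] {a b t u v : α}
    (hab : DecorationSite a b) (hk : 3 ≤ {x | a ⋖ x}.ncard)
    (ht : a ⋖ t) (hu : a ⋖ u) (hv : a ⋖ v)
    (htu : t ≠ u) (htv : t ≠ v) (huv : u ≠ v) :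
    (t ⊔ u = b ∧ t ⊔ v = b ∧ u ⊔ v = b) ∧
    (t ⊓ u = a ∧ t ⊓ v = a ∧ u ⊓ v = a) ∧
    ¬ (∀ x y z : α, x ⊓ (y ⊔ z) = (x ⊓ y) ⊔ (x ⊓ z)) :=
  stmt_14_general hab ht hu hv htu htv huv
end
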